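/- arXiv:1705.01777 — 2 statements merged into one kernel-verified Lean document; each statement's English description precedes it below -/
import Mathlib

section
/- Let n ≥ 1 and let P = (Pⁱʲ) be a constant skew-symmetric n×n real matrix. For polynomials f, g in n variables define the Moyal product f⋆g := Σ_{k≥0} (ℏᵏ/k!) Σ P^{i₁j₁}⋯P^{iₖjₖ} (∂_{i₁}⋯∂_{iₖ} f)(∂_{j₁}⋯∂_{jₖ} g) in R[x₁,…,xₙ][ℏ]. Then ⋆ is associative: (f⋆g)⋆h = f⋆(g⋆h). -/
open MvPolynomial PowerSeries

/-- Iterated partial derivative `∂_{v 0} ⋯ ∂_{v (k-1)}` of a polynomial. -/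
noncomputable def pderivMulti {n k : ℕ} (v : Fin k → Fin n)
    (f : MvPolynomial (Fin n) ℝ) : MvPolynomial (Fin n) ℝ :=
  (List.ofFn v).foldr (fun i acc => pderiv i acc) f

/-- The `k`-th term `(1/k!) Σ P^{i₁j₁}⋯P^{iₖjₖ} ∂_{i₁…iₖ}f · ∂_{j₁…jₖ}g`
of the Moyal product. -/
noncomputable def moyalTerm {n : ℕ} (P : Matrix (Fin n) (Fin n) ℝ) (k : ℕ)
    (f g : MvPolynomial (Fin n) ℝ) : MvPolynomial (Fin n) ℝ :=
  ((k.factorial : ℝ)⁻¹) •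
    ∑ idx : Fin k → Fin n × Fin n,
      (∏ a, P (idx a).1 (idx a).2) •
        (pderivMulti (fun a => (idx a).1) f * pderivMulti (fun a => (idx a).2) g)

/-- The Moyal star-product, extended ℏ-bilinearly to formal power series in ℏ
with polynomial coefficients. -/
noncomputable def moyalStar {n : ℕ} (P : Matrix (Fin n) (Fin n) ℝ)
    (F G : PowerSeries (MvPolynomial (Fin n) ℝ)) :
    PowerSeries (MvPolynomial (Fin n) ℝ) :=
  PowerSeries.mk fun m =>
    ∑ k ∈ Finset.range (m + 1), ∑ p ∈ Finset.HasAntidiagonal.antidiagonal (m - k),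
      moyalTerm P k (PowerSeries.coeff p.1 F) (PowerSeries.coeff p.2 G)

/-!
Write `B_k` for the `k`-th Moyal term. One has `(k + 1) B_{k+1}(f, g) = Σ P^{ij} B_k(∂_i f, ∂_j g)`,
and every `∂_i` acts on `B_k` by the Leibniz rule. Consequently the ℏ^m-coefficients of the two
bracketings, `L_m = Σ_{a+b=m} B_a(B_b(f, g), h)` and `R_m = Σ_{a+b=m} B_a(f, B_b(g, h))`, satisfy
the same recursion
`(m + 1) X_{m+1}(f, g, h) =
  Σ P^{ij} (X_m(∂_i f, ∂_j g, h) + X_m(∂_i f, g, ∂_j h) + X_m(f, ∂_i g, ∂_j h))`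
(both are the degree-`m` part of `exp ℏ(D₁₂ + D₁₃ + D₂₃)`, with `D_{ab}` the operator
`P^{ij} ∂_i ⊗ ∂_j` acting on the factors `a` and `b`), and both equal `f g h` for `m = 0`.
-/

theorem MvPolynomial.pderiv_comm {R σ : Type*} [CommSemiring R] (i j : σ) (f : MvPolynomial σ R) :
    pderiv i (pderiv j f) = pderiv j (pderiv i f) := by
  classical
  induction f using MvPolynomial.induction_on with
  | C a => simp only [pderiv_C, map_zero]
  | add p q hp hq => simp only [map_add, hp, hq]
  | mul_X p k hp =>
    simp only [pderiv_mul, map_add, pderiv_X, hp, Pi.single_apply]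
    split_ifs <;> simp only [map_zero, pderiv_one, mul_zero, mul_one, add_zero]
    ring

section IteratedPDeriv

variable {n : ℕ}

theorem pderivMulti_eq_listProd {k : ℕ} (v : Fin k → Fin n) :
    pderivMulti v =
      ⇑((List.ofFn v).map fun i => (pderiv (R := ℝ) i).toLinearMap).prod := by
  funext f
  unfold pderivMulti
  induction List.ofFn v with
  | nil => rfl
  | cons i l ih => simp [ih, Module.End.mul_apply]

theorem pderivMulti_succ {k : ℕ} (v : Fin (k + 1) → Fin n) (f : MvPolynomial (Fin n) ℝ) :
    pderivMulti v f = pderivMulti (fun a => v a.castSucc) (pderiv (v (Fin.last k)) f) := by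
  simp only [pderivMulti, List.ofFn_succ', List.concat_eq_append, List.foldr_concat]

theorem pderiv_pderivMulti {k : ℕ} (v : Fin k → Fin n) (i : Fin n) (f : MvPolynomial (Fin n) ℝ) :
    pderiv i (pderivMulti v f) = pderivMulti v (pderiv i f) := by
  have hcomm : Commute (pderiv (R := ℝ) i).toLinearMap
      ((List.ofFn v).map fun j => (pderiv (R := ℝ) j).toLinearMap).prod := by
    refine Commute.list_prod_right _ _ fun d hd => ?_
    obtain ⟨j, -, rfl⟩ := List.mem_map.mp hd
    exact LinearMap.ext fun g => pderiv_comm i j g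
  rw [pderivMulti_eq_listProd]
  exact LinearMap.congr_fun hcomm f

end IteratedPDeriv

theorem Finset.Nat.succ_nsmul_sum_antidiagonal_succ {M : Type*} [AddCommMonoid M] (m : ℕ)
    (T : ℕ × ℕ → M) :
    (m + 1) • ∑ p ∈ antidiagonal (m + 1), T p =
      ∑ p ∈ antidiagonal m, ((p.1 + 1) • T (p.1 + 1, p.2) + (p.2 + 1) • T (p.1, p.2 + 1)) := by
  calc (m + 1) • ∑ p ∈ antidiagonal (m + 1), T p
      = ∑ p ∈ antidiagonal (m + 1), (p.1 • T p + p.2 • T p) := by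
        rw [Finset.smul_sum]
        refine Finset.sum_congr rfl fun p hp => ?_
        rw [← add_smul, mem_antidiagonal.mp hp]
    _ = _ := by
        rw [Finset.sum_add_distrib, Finset.Nat.sum_antidiagonal_succ,
          Finset.Nat.sum_antidiagonal_succ', zero_smul, zero_smul, zero_add, zero_add,
          ← Finset.sum_add_distrib]

theorem Finset.Nat.sum_antidiagonal_eq_of_snd_ne_zero {M : Type*} [AddCommMonoid M] (d : ℕ)
    (φ : ℕ × ℕ → M) (hφ : ∀ p : ℕ × ℕ, p.2 ≠ 0 → φ p = 0) :
    ∑ p ∈ antidiagonal d, φ p = φ (d, 0) :=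
  Finset.sum_eq_single_of_mem (d, 0) (by simp) fun p hp hne => hφ p fun h0 =>
    hne (Prod.ext (by simpa [h0] using mem_antidiagonal.mp hp) h0)

theorem Finset.Nat.sum_antidiagonal_eq_of_fst_ne_zero {M : Type*} [AddCommMonoid M] (d : ℕ)
    (φ : ℕ × ℕ → M) (hφ : ∀ p : ℕ × ℕ, p.1 ≠ 0 → φ p = 0) :
    ∑ p ∈ antidiagonal d, φ p = φ (0, d) := by
  rw [← Finset.Nat.sum_antidiagonal_swap]
  exact sum_antidiagonal_eq_of_snd_ne_zero d (fun p => φ p.swap) fun p hp => hφ p.swap hp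

section MoyalTerm

variable {n : ℕ} (P : Matrix (Fin n) (Fin n) ℝ)

theorem moyalTerm_zero (f g : MvPolynomial (Fin n) ℝ) : moyalTerm P 0 f g = f * g := by
  simp [moyalTerm, pderivMulti]

theorem moyalTerm_succ (k : ℕ) (f g : MvPolynomial (Fin n) ℝ) :
    (k + 1) • moyalTerm P (k + 1) f g =
      ∑ p : Fin n × Fin n, P p.1 p.2 • moyalTerm P k (pderiv p.1 f) (pderiv p.2 g) := by
  have hfact : ((k + 1 : ℕ) : ℝ) * ((k + 1).factorial : ℝ)⁻¹ = (k.factorial : ℝ)⁻¹ := by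
    rw [Nat.factorial_succ, Nat.cast_mul, mul_inv, ← mul_assoc,
      mul_inv_cancel₀ (by positivity), one_mul]
  rw [← Nat.cast_smul_eq_nsmul ℝ]
  simp only [moyalTerm, smul_smul, hfact]
  rw [← (Fin.snocEquiv fun _ => Fin n × Fin n).sum_comp, Fintype.sum_prod_type, Finset.smul_sum]
  refine Finset.sum_congr rfl fun p _ => ?_
  simp only [Finset.smul_sum]
  refine Finset.sum_congr rfl fun w _ => ?_
  rw [pderivMulti_succ, pderivMulti_succ]
  simp only [Fin.snocEquiv_apply, Fin.prod_univ_castSucc, Fin.snoc_castSucc, Fin.snoc_last]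
  module

theorem pderiv_moyalTerm (k : ℕ) (i : Fin n) (f g : MvPolynomial (Fin n) ℝ) :
    pderiv i (moyalTerm P k f g) = moyalTerm P k (pderiv i f) g + moyalTerm P k f (pderiv i g) := by
  simp only [moyalTerm, Derivation.map_smul, map_sum, pderiv_mul, pderiv_pderivMulti, smul_add,
    Finset.sum_add_distrib]

noncomputable def moyalTermBilin (k : ℕ) :
    MvPolynomial (Fin n) ℝ →ₗ[ℝ] MvPolynomial (Fin n) ℝ →ₗ[ℝ] MvPolynomial (Fin n) ℝ :=
  LinearMap.mk₂ ℝ (moyalTerm P k)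
    (fun f f' g => by
      simp only [moyalTerm, pderivMulti_eq_listProd, map_add, add_mul, smul_add,
        Finset.sum_add_distrib])
    (fun c f g => by
      simp only [moyalTerm, pderivMulti_eq_listProd, map_smul, smul_mul_assoc, Finset.smul_sum]
      refine Finset.sum_congr rfl fun idx _ => ?_
      module)
    (fun f g g' => by
      simp only [moyalTerm, pderivMulti_eq_listProd, map_add, mul_add, smul_add,
        Finset.sum_add_distrib])
    (fun c f g => by
      simp only [moyalTerm, pderivMulti_eq_listProd, map_smul, mul_smul_comm, Finset.smul_sum]
      refine Finset.sum_congr rfl fun idx _ => ?_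
      module)

theorem moyalTerm_add_left (k : ℕ) (f f' g : MvPolynomial (Fin n) ℝ) :
    moyalTerm P k (f + f') g = moyalTerm P k f g + moyalTerm P k f' g :=
  (moyalTermBilin P k).map_add₂ f f' g

theorem moyalTerm_add_right (k : ℕ) (f g g' : MvPolynomial (Fin n) ℝ) :
    moyalTerm P k f (g + g') = moyalTerm P k f g + moyalTerm P k f g' :=
  (moyalTermBilin P k f).map_add g g'

theorem moyalTerm_nsmul_left (k c : ℕ) (f g : MvPolynomial (Fin n) ℝ) :
    moyalTerm P k (c • f) g = c • moyalTerm P k f g :=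
  map_nsmul ((moyalTermBilin P k).flip g) c f

theorem moyalTerm_nsmul_right (k c : ℕ) (f g : MvPolynomial (Fin n) ℝ) :
    moyalTerm P k f (c • g) = c • moyalTerm P k f g :=
  map_nsmul (moyalTermBilin P k f) c g

theorem moyalTerm_sum_smul_left {ι : Type*} (s : Finset ι) (c : ι → ℝ)
    (u : ι → MvPolynomial (Fin n) ℝ) (k : ℕ) (g : MvPolynomial (Fin n) ℝ) :
    moyalTerm P k (∑ i ∈ s, c i • u i) g = ∑ i ∈ s, c i • moyalTerm P k (u i) g :=
  (map_sum ((moyalTermBilin P k).flip g) _ s).trans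
    (Finset.sum_congr rfl fun i _ => map_smul ((moyalTermBilin P k).flip g) (c i) (u i))

theorem moyalTerm_sum_smul_right {ι : Type*} (s : Finset ι) (c : ι → ℝ)
    (u : ι → MvPolynomial (Fin n) ℝ) (k : ℕ) (f : MvPolynomial (Fin n) ℝ) :
    moyalTerm P k f (∑ i ∈ s, c i • u i) = ∑ i ∈ s, c i • moyalTerm P k f (u i) :=
  (map_sum (moyalTermBilin P k f) _ s).trans
    (Finset.sum_congr rfl fun i _ => map_smul (moyalTermBilin P k f) (c i) (u i))

theorem moyalTerm_zero_left (k : ℕ) (g : MvPolynomial (Fin n) ℝ) : moyalTerm P k 0 g = 0 :=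
  (moyalTermBilin P k).map_zero₂ g

theorem moyalTerm_zero_right (k : ℕ) (f : MvPolynomial (Fin n) ℝ) : moyalTerm P k f 0 = 0 :=
  (moyalTermBilin P k f).map_zero

end MoyalTerm

section Associativity

open Finset

variable {n : ℕ} (P : Matrix (Fin n) (Fin n) ℝ)

noncomputable def moyalAssocLeft (m : ℕ) (f g h : MvPolynomial (Fin n) ℝ) :
    MvPolynomial (Fin n) ℝ :=
  ∑ p ∈ antidiagonal m, moyalTerm P p.1 (moyalTerm P p.2 f g) h

noncomputable def moyalAssocRight (m : ℕ) (f g h : MvPolynomial (Fin n) ℝ) :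
    MvPolynomial (Fin n) ℝ :=
  ∑ p ∈ antidiagonal m, moyalTerm P p.1 f (moyalTerm P p.2 g h)

theorem succ_nsmul_moyalAssocLeft (m : ℕ) (f g h : MvPolynomial (Fin n) ℝ) :
    (m + 1) • moyalAssocLeft P (m + 1) f g h =
      ∑ q : Fin n × Fin n, P q.1 q.2 •
        (moyalAssocLeft P m (pderiv q.1 f) (pderiv q.2 g) h +
          moyalAssocLeft P m (pderiv q.1 f) g (pderiv q.2 h) +
          moyalAssocLeft P m f (pderiv q.1 g) (pderiv q.2 h)) := by
  have hdiff : ∀ p : ℕ × ℕ, (p.1 + 1) • moyalTerm P (p.1 + 1) (moyalTerm P p.2 f g) h =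
      ∑ q : Fin n × Fin n, P q.1 q.2 •
        (moyalTerm P p.1 (moyalTerm P p.2 (pderiv q.1 f) g) (pderiv q.2 h) +
          moyalTerm P p.1 (moyalTerm P p.2 f (pderiv q.1 g)) (pderiv q.2 h)) := fun p => by
    rw [moyalTerm_succ]
    simp only [pderiv_moyalTerm, moyalTerm_add_left]
  have hinner : ∀ p : ℕ × ℕ, (p.2 + 1) • moyalTerm P p.1 (moyalTerm P (p.2 + 1) f g) h =
      ∑ q : Fin n × Fin n, P q.1 q.2 •
        moyalTerm P p.1 (moyalTerm P p.2 (pderiv q.1 f) (pderiv q.2 g)) h := fun p => by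
    rw [← moyalTerm_nsmul_left, moyalTerm_succ, moyalTerm_sum_smul_left]
  rw [moyalAssocLeft, Finset.Nat.succ_nsmul_sum_antidiagonal_succ]
  simp only [hdiff, hinner, moyalAssocLeft, Finset.smul_sum, smul_add, Finset.sum_add_distrib,
    Finset.sum_comm (s := antidiagonal m)]
  abel

theorem succ_nsmul_moyalAssocRight (m : ℕ) (f g h : MvPolynomial (Fin n) ℝ) :
    (m + 1) • moyalAssocRight P (m + 1) f g h =
      ∑ q : Fin n × Fin n, P q.1 q.2 •
        (moyalAssocRight P m (pderiv q.1 f) (pderiv q.2 g) h +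
          moyalAssocRight P m (pderiv q.1 f) g (pderiv q.2 h) +
          moyalAssocRight P m f (pderiv q.1 g) (pderiv q.2 h)) := by
  have hdiff : ∀ p : ℕ × ℕ, (p.1 + 1) • moyalTerm P (p.1 + 1) f (moyalTerm P p.2 g h) =
      ∑ q : Fin n × Fin n, P q.1 q.2 •
        (moyalTerm P p.1 (pderiv q.1 f) (moyalTerm P p.2 (pderiv q.2 g) h) +
          moyalTerm P p.1 (pderiv q.1 f) (moyalTerm P p.2 g (pderiv q.2 h))) := fun p => by
    rw [moyalTerm_succ]
    simp only [pderiv_moyalTerm, moyalTerm_add_right]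
  have hinner : ∀ p : ℕ × ℕ, (p.2 + 1) • moyalTerm P p.1 f (moyalTerm P (p.2 + 1) g h) =
      ∑ q : Fin n × Fin n, P q.1 q.2 •
        moyalTerm P p.1 f (moyalTerm P p.2 (pderiv q.1 g) (pderiv q.2 h)) := fun p => by
    rw [← moyalTerm_nsmul_right, moyalTerm_succ, moyalTerm_sum_smul_right]
  rw [moyalAssocRight, Finset.Nat.succ_nsmul_sum_antidiagonal_succ]
  simp only [hdiff, hinner, moyalAssocRight, Finset.smul_sum, smul_add, Finset.sum_add_distrib,
    Finset.sum_comm (s := antidiagonal m)]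

theorem moyalAssocLeft_eq_moyalAssocRight (m : ℕ) (f g h : MvPolynomial (Fin n) ℝ) :
    moyalAssocLeft P m f g h = moyalAssocRight P m f g h := by
  induction m generalizing f g h with
  | zero => simp [moyalAssocLeft, moyalAssocRight, moyalTerm_zero, mul_assoc]
  | succ m ih =>
    refine nsmul_right_injective m.succ_ne_zero ?_
    simp only [succ_nsmul_moyalAssocLeft, succ_nsmul_moyalAssocRight, ih]

end Associativity

section MoyalStar

open Finset

variable {n : ℕ} (P : Matrix (Fin n) (Fin n) ℝ)

theorem moyalStar_C_right (F : PowerSeries (MvPolynomial (Fin n) ℝ)) (h : MvPolynomial (Fin n) ℝ) :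
    moyalStar P F (PowerSeries.C h) = PowerSeries.mk fun m =>
      ∑ p ∈ antidiagonal m, moyalTerm P p.1 (PowerSeries.coeff p.2 F) h := by
  refine PowerSeries.ext fun m => ?_
  rw [moyalStar, PowerSeries.coeff_mk, PowerSeries.coeff_mk,
    Finset.Nat.sum_antidiagonal_eq_sum_range_succ_mk]
  refine Finset.sum_congr rfl fun k _ => ?_
  rw [Finset.Nat.sum_antidiagonal_eq_of_snd_ne_zero, PowerSeries.coeff_zero_C]
  intro p hp
  rw [PowerSeries.coeff_C, if_neg hp, moyalTerm_zero_right]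

theorem moyalStar_C_left (f : MvPolynomial (Fin n) ℝ) (G : PowerSeries (MvPolynomial (Fin n) ℝ)) :
    moyalStar P (PowerSeries.C f) G = PowerSeries.mk fun m =>
      ∑ p ∈ antidiagonal m, moyalTerm P p.1 f (PowerSeries.coeff p.2 G) := by
  refine PowerSeries.ext fun m => ?_
  rw [moyalStar, PowerSeries.coeff_mk, PowerSeries.coeff_mk,
    Finset.Nat.sum_antidiagonal_eq_sum_range_succ_mk]
  refine Finset.sum_congr rfl fun k _ => ?_
  rw [Finset.Nat.sum_antidiagonal_eq_of_fst_ne_zero, PowerSeries.coeff_zero_C]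
  intro p hp
  rw [PowerSeries.coeff_C, if_neg hp, moyalTerm_zero_left]

theorem moyalStar_C_C (f g : MvPolynomial (Fin n) ℝ) :
    moyalStar P (PowerSeries.C f) (PowerSeries.C g) = PowerSeries.mk fun m => moyalTerm P m f g := by
  rw [moyalStar_C_right]
  congr 1
  funext m
  rw [Finset.Nat.sum_antidiagonal_eq_of_snd_ne_zero, PowerSeries.coeff_zero_C]
  intro p hp
  rw [PowerSeries.coeff_C, if_neg hp, moyalTerm_zero_left]

end MoyalStar

theorem moyal_associative_general {n : ℕ}
    (P : Matrix (Fin n) (Fin n) ℝ)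
    (f g h : MvPolynomial (Fin n) ℝ) :
    moyalStar P (moyalStar P (PowerSeries.C f) (PowerSeries.C g))
        (PowerSeries.C h)
      = moyalStar P (PowerSeries.C f)
          (moyalStar P (PowerSeries.C g) (PowerSeries.C h)) := by
  rw [moyalStar_C_C, moyalStar_C_C, moyalStar_C_right, moyalStar_C_left]
  congr 1
  funext m
  simp only [PowerSeries.coeff_mk]
  exact moyalAssocLeft_eq_moyalAssocRight P m f g h

/-- The Moyal product associated with a constant skew-symmetric matrix `P`
is associative on polynomials. -/
theorem moyal_associative {n : ℕ} (hn : 1 ≤ n)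
    (P : Matrix (Fin n) (Fin n) ℝ) (hskew : ∀ i j, P i j = - P j i)
    (f g h : MvPolynomial (Fin n) ℝ) :
    moyalStar P (moyalStar P (PowerSeries.C f) (PowerSeries.C g))
        (PowerSeries.C h)
      = moyalStar P (PowerSeries.C f)
          (moyalStar P (PowerSeries.C g) (PowerSeries.C h)) :=
  moyal_associative_general P f g h
end

section
/- Let ℓ := 4ϑ - D and ℓ† := 4ϑ + D be the linearization of the Miura map w = 2ϑ² - ϑ_x and its formal adjoint, where ϑ is smooth and D = d/dx, and let B := D/2. Then the composition ℓ ∘ B ∘ ℓ† equals -D³/2 + 4wD + 2w_x (as differential operators acting on smooth functions), where w = 2ϑ² - ϑ_x; i.e. the second KdV Hamiltonian operator factorizes through the first mKdV Hamiltonian operator. -/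
/-- The factorization `A₂ = ℓ ∘ B ∘ ℓ†` of the second KdV Hamiltonian operator
through the first mKdV Hamiltonian operator `B = D/2`, where `ℓ = 4ϑ - D` is
the linearization of the Miura map `w = 2ϑ² - ϑ_x` and `ℓ† = 4ϑ + D` is its
formal adjoint: `(ℓ∘B∘ℓ†)(f) = -f'''/2 + 4w f' + 2w' f`. -/
theorem kdvA2_factorization_through_mkdv (ϑ : ℝ → ℝ) (hϑ : ContDiff ℝ (⊤ : ℕ∞) ϑ)
    (f : ℝ → ℝ) (hf : ContDiff ℝ (⊤ : ℕ∞) f) :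
    letI ℓdag : (ℝ → ℝ) → (ℝ → ℝ) := fun g x => 4 * ϑ x * g x + deriv g x
    letI B : (ℝ → ℝ) → (ℝ → ℝ) := fun g x => deriv g x / 2
    letI ℓ : (ℝ → ℝ) → (ℝ → ℝ) := fun g x => 4 * ϑ x * g x - deriv g x
    letI w : ℝ → ℝ := fun x => 2 * (ϑ x) ^ 2 - deriv ϑ x
    ∀ x, ℓ (B (ℓdag f)) x
      = -(deriv^[3] f x) / 2 + 4 * w x * deriv f x + 2 * deriv w x * f x := by
  intro x
  have hϑ0 : ContDiff ℝ (⊤:ℕ∞) ϑ := hϑ.of_le (by simp)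
  have hf0 : ContDiff ℝ (⊤:ℕ∞) f := hf.of_le (by simp)
  have hϑ' : ContDiff ℝ (⊤:ℕ∞) (deriv ϑ) := (contDiff_infty_iff_deriv.mp hϑ0).2
  have hf' : ContDiff ℝ (⊤:ℕ∞) (deriv f) := (contDiff_infty_iff_deriv.mp hf0).2
  have hf'' : ContDiff ℝ (⊤:ℕ∞) (deriv (deriv f)) := (contDiff_infty_iff_deriv.mp hf').2
  have dϑ : Differentiable ℝ ϑ := hϑ0.differentiable (by simp)
  have dϑ' : Differentiable ℝ (deriv ϑ) := hϑ'.differentiable (by simp)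
  have df : Differentiable ℝ f := hf0.differentiable (by simp)
  have df' : Differentiable ℝ (deriv f) := hf'.differentiable (by simp)
  have df'' : Differentiable ℝ (deriv (deriv f)) := hf''.differentiable (by simp)
  simp only []
  -- first derivative of 4ϑf + f'
  have h1 : deriv (fun x => 4 * ϑ x * f x + deriv f x)
      = fun x => 4 * deriv ϑ x * f x + 4 * ϑ x * deriv f x + deriv (deriv f) x := by
    funext y
    rw [deriv_fun_add (((dϑ y).const_mul 4).fun_mul (df y)) (df' y),
        deriv_fun_mul ((dϑ y).const_mul 4) (df y), deriv_const_mul 4 (dϑ y)]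
  have h2 : deriv (fun x => deriv (fun x => 4 * ϑ x * f x + deriv f x) x / 2) x
      = (4 * deriv (deriv ϑ) x * f x + 4 * deriv ϑ x * deriv f x
        + 4 * deriv ϑ x * deriv f x + 4 * ϑ x * deriv (deriv f) x
        + deriv (deriv (deriv f)) x) / 2 := by
    simp only [h1]
    rw [deriv_div_const, deriv_fun_add (by fun_prop) (df'' x),
        deriv_fun_add (by fun_prop) (by fun_prop),
        deriv_fun_mul ((dϑ'.const_mul 4) x) (df x),
        deriv_fun_mul ((dϑ.const_mul 4) x) (df' x),
        deriv_const_mul 4 (dϑ' x), deriv_const_mul 4 (dϑ x)]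
    ring
  rw [h2]
  simp only [h1]
  have hw : deriv (fun x => 2 * ϑ x ^ 2 - deriv ϑ x) x
      = 4 * ϑ x * deriv ϑ x - deriv (deriv ϑ) x := by
    rw [deriv_fun_sub (by fun_prop) (dϑ' x), deriv_const_mul 2 (by fun_prop),
        deriv_fun_pow (dϑ x) 2]
    ring
  rw [hw]
  show 4 * ϑ x * ((4 * deriv ϑ x * f x + 4 * ϑ x * deriv f x + deriv (deriv f) x) / 2) - _ = _
  rw [Function.iterate_succ', Function.iterate_succ', Function.iterate_one]
  simp only [Function.comp_apply]
  ring
end
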